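/- arXiv:math/0503278 — 3 statements merged into one kernel-verified Lean document; each statement's English description precedes it below -/
import Mathlib

section
/- Let I ⊆ R = k[x_0,...,x_n] be a homogeneous ideal, F ∈ I a homogeneous polynomial of degree d, and L a linear form such that (L,F) is a regular sequence. Let J = L·I + (F). Then there is an exact sequence 0 → R(-d-1) → I(-1) ⊕ R(-d) → J → 0, where the first map sends C to (FC, LC) and the second sends (A,B) to LA − FB. -/
open MvPolynomial Pointwise

attribute [local instance] MvPolynomial.gradedAlgebra


/-- Basic double linkage exact sequence: for `J = L·I + (F)` with `(L,F)` a regular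
sequence, the sequence `0 → R(-d-1) → I(-1) ⊕ R(-d) → J → 0` with maps
`C ↦ (FC, LC)` and `(A,B) ↦ LA - FB` is exact.  (The maps are homogeneous of
degree 0 for the indicated twists; exactness is expressed elementwise.) -/
theorem stmt1 {k : Type} [Field k] {n : ℕ}
    (I : Ideal (MvPolynomial (Fin (n + 1)) k))
    (hI : Ideal.IsHomogeneous (homogeneousSubmodule (Fin (n + 1)) k) I)
    (F : MvPolynomial (Fin (n + 1)) k) (hFI : F ∈ I) (d : ℕ) (hFd : F.IsHomogeneous d)
    (L : MvPolynomial (Fin (n + 1)) k) (hL : L.IsHomogeneous 1)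
    (hreg : RingTheory.Sequence.IsRegular (MvPolynomial (Fin (n + 1)) k) [L, F])
    (J : Ideal (MvPolynomial (Fin (n + 1)) k))
    (hJ : J = Ideal.span {L} * I + Ideal.span {F}) :
    -- injectivity of C ↦ (FC, LC)
    (∀ C : MvPolynomial (Fin (n + 1)) k, F * C = 0 ∧ L * C = 0 → C = 0) ∧
    -- the second map lands in J and is surjective onto J
    (∀ A ∈ I, ∀ B : MvPolynomial (Fin (n + 1)) k, L * A - F * B ∈ J) ∧
    (∀ g ∈ J, ∃ A ∈ I, ∃ B : MvPolynomial (Fin (n + 1)) k, g = L * A - F * B) ∧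
    -- exactness in the middle: the kernel of (A,B) ↦ LA - FB is the image of C ↦ (FC, LC)
    (∀ A ∈ I, ∀ B : MvPolynomial (Fin (n + 1)) k, L * A - F * B = 0 →
      ∃ C : MvPolynomial (Fin (n + 1)) k, A = F * C ∧ B = L * C) := by
  classical
  obtain ⟨hLreg, hFreg⟩ :=
    (RingTheory.Sequence.isRegular_cons_iff (MvPolynomial (Fin (n + 1)) k) L [F]).mp hreg
  obtain ⟨hFreg, -⟩ := (RingTheory.Sequence.isRegular_cons_iff _ F []).mp hFreg
  have hspan : L • (⊤ : Submodule (MvPolynomial (Fin (n + 1)) k) (MvPolynomial (Fin (n + 1)) k))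
      = Ideal.span {L} := by
    rw [← Submodule.ideal_span_singleton_smul, smul_eq_mul, Ideal.mul_top]
  have key : ∀ A B : MvPolynomial (Fin (n + 1)) k, L * A = F * B →
      ∃ C : MvPolynomial (Fin (n + 1)) k, A = F * C ∧ B = L * C := by
    intro A B h
    have hB0 : (Submodule.Quotient.mk B : QuotSMulTop L (MvPolynomial (Fin (n + 1)) k)) = 0 := by
      apply hFreg
      show F • (Submodule.Quotient.mk B : QuotSMulTop L _) = F • (0 : QuotSMulTop L _)
      rw [smul_zero, ← Submodule.Quotient.mk_smul, Submodule.Quotient.mk_eq_zero, hspan,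
        smul_eq_mul, ← h, Ideal.mem_span_singleton]
      exact ⟨A, rfl⟩
    rw [Submodule.Quotient.mk_eq_zero, hspan, Ideal.mem_span_singleton] at hB0
    obtain ⟨C, hC⟩ := hB0
    refine ⟨C, hLreg ?_, hC⟩
    show L * A = L * (F * C)
    rw [h, hC]; ring
  refine ⟨?_, ?_, ?_, ?_⟩
  · intro C hC
    apply hLreg
    simpa using hC.2
  · intro A hA B
    rw [hJ]
    refine Submodule.sub_mem _ (Submodule.mem_sup_left ?_)
      (Submodule.mem_sup_right (Ideal.mem_span_singleton.mpr ⟨B, rfl⟩))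
    exact Ideal.mul_mem_mul (Ideal.mem_span_singleton_self L) hA
  · intro g hg
    rw [hJ] at hg
    obtain ⟨a, ha, b, hb, hab⟩ := Submodule.mem_sup.mp hg
    obtain ⟨A, hA, hLA⟩ := Ideal.mem_span_singleton_mul.mp ha
    obtain ⟨c, hc⟩ := Ideal.mem_span_singleton.mp hb
    exact ⟨A, hA, -c, by rw [← hab, ← hLA, hc]; ring⟩
  · intro A _ B hAB
    exact key A B (by linear_combination hAB)
end

section
/- In R = k[a,b,c,d], for the curve (0,r,r,r,r,0), the defining ideal (a,c)^r ∩ (a,d)^r ∩ (b,c)^r ∩ (b,d)^r equals (ab, cd)^r. -/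
open MvPolynomial Finsupp

lemma span_pair_pow {R : Type*} [CommRing R] (x y : R) (r : ℕ) :
    (Ideal.span {x, y}) ^ r = Ideal.span ((fun i => x ^ i * y ^ (r - i)) '' Set.Iic r) := by
  induction r with
  | zero =>
      simp only [pow_zero]
      have : ((fun i => x ^ i * y ^ (0 - i)) '' Set.Iic 0) = {1} := by
        ext z
        simp [Set.mem_image, eq_comm]
      rw [this, Ideal.span_singleton_one]
      exact Ideal.one_eq_top
  | succ n ih =>
      rw [pow_succ, ih, Ideal.span_mul_span']
      apply le_antisymm
      · rw [Ideal.span_le]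
        rintro _ ⟨u, ⟨i, hi, rfl⟩, v, hv, rfl⟩
        simp only [Set.mem_Iic] at hi
        rcases hv with rfl | rfl
        · apply Ideal.subset_span
          refine ⟨i + 1, by simp; omega, ?_⟩
          beta_reduce
          rw [show n + 1 - (i + 1) = n - i by omega]
          ring
        · apply Ideal.subset_span
          refine ⟨i, by simp; omega, ?_⟩
          beta_reduce
          rw [show n + 1 - i = (n - i) + 1 by omega]
          ring
      · rw [Ideal.span_le]
        rintro _ ⟨i, hi, rfl⟩
        simp only [Set.mem_Iic] at hi
        rcases Nat.eq_zero_or_pos i with rfl | hpos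
        · refine Ideal.subset_span ⟨x ^ 0 * y ^ (n - 0), ⟨0, by simp, rfl⟩, y, by simp, ?_⟩
          beta_reduce
          rw [Nat.sub_zero, Nat.sub_zero]
          ring
        · obtain ⟨j, rfl⟩ := Nat.exists_eq_succ_of_ne_zero (Nat.pos_iff_ne_zero.mp hpos)
          refine Ideal.subset_span ⟨x ^ j * y ^ (n - j), ⟨j, by simp; omega, rfl⟩, x, by simp, ?_⟩
          beta_reduce
          rw [show n + 1 - (j + 1) = n - j by omega, show j.succ = j + 1 from rfl]
          ring

lemma mem_span_pair_monomial {k : Type} [Field k] (a b : Fin 4 →₀ ℕ) (r : ℕ)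
    (f : MvPolynomial (Fin 4) k) :
    f ∈ (Ideal.span {monomial a (1:k), monomial b 1}) ^ r ↔
      ∀ m ∈ f.support, ∃ i ≤ r, i • a + (r - i) • b ≤ m := by
  rw [span_pair_pow]
  have himg : ((fun i => (monomial a (1:k)) ^ i * (monomial b 1) ^ (r - i)) '' Set.Iic r)
      = (fun s => monomial s (1:k)) '' ((fun i => i • a + (r - i) • b) '' Set.Iic r) := by
    rw [Set.image_image]
    apply Set.image_congr'
    intro i
    rw [monomial_pow, monomial_pow, monomial_mul, one_pow, one_pow, one_mul]
  rw [himg, mem_ideal_span_monomial_image]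
  simp only [Set.mem_image, Set.mem_Iic]
  constructor
  · intro h m hm
    obtain ⟨si, ⟨i, hi, rfl⟩, hle⟩ := h m hm
    exact ⟨i, hi, hle⟩
  · intro h m hm
    obtain ⟨i, hi, hle⟩ := h m hm
    exact ⟨_, ⟨i, hi, rfl⟩, hle⟩

lemma le_fin4 (v m : Fin 4 →₀ ℕ) : v ≤ m ↔ v 0 ≤ m 0 ∧ v 1 ≤ m 1 ∧ v 2 ≤ m 2 ∧ v 3 ≤ m 3 := by
  rw [Finsupp.le_def]
  constructor
  · intro h; exact ⟨h 0, h 1, h 2, h 3⟩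
  · rintro ⟨h0, h1, h2, h3⟩ x; fin_cases x <;> assumption

/-- In `k[a,b,c,d]` (with `a = X 0, b = X 1, c = X 2, d = X 3`), the defining ideal of
the tetrahedral curve `(0,r,r,r,r,0)`, namely
`(a,c)^r ∩ (a,d)^r ∩ (b,c)^r ∩ (b,d)^r`, equals `(ab, cd)^r`. -/
theorem stmt7 {k : Type} [Field k] (r : ℕ) :
    (Ideal.span {X 0, X 2}) ^ r ⊓ (Ideal.span {X 0, X 3}) ^ r ⊓
      (Ideal.span {X 1, X 2}) ^ r ⊓ (Ideal.span {X 1, X 3}) ^ r =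
    ((Ideal.span {X 0 * X 1, X 2 * X 3} : Ideal (MvPolynomial (Fin 4) k))) ^ r := by
  have hX : ∀ n : Fin 4, (X n : MvPolynomial (Fin 4) k) = monomial (Finsupp.single n 1) 1 := by
    intro n; rw [← pow_one (X n), X_pow_eq_monomial]
  ext f
  simp only [Ideal.mem_inf, hX, monomial_mul, one_mul, mem_span_pair_monomial]
  constructor
  · rintro ⟨⟨⟨h1, h2⟩, h3⟩, h4⟩ m hm
    obtain ⟨i1, hi1, hle1⟩ := h1 m hm
    obtain ⟨i2, hi2, hle2⟩ := h2 m hm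
    obtain ⟨i3, hi3, hle3⟩ := h3 m hm
    obtain ⟨i4, hi4, hle4⟩ := h4 m hm
    rw [le_fin4] at hle1 hle2 hle3 hle4
    simp only [Finsupp.add_apply, Finsupp.smul_apply, Finsupp.single_apply, smul_eq_mul] at hle1 hle2 hle3 hle4 ⊢
    refine ⟨min r (min (m 0) (m 1)), by omega, ?_⟩
    rw [le_fin4]
    simp only [Finsupp.add_apply, Finsupp.smul_apply, Finsupp.single_apply, smul_eq_mul]
    simp at hle1 hle2 hle3 hle4 ⊢
    omega
  · intro h
    refine ⟨⟨⟨?_, ?_⟩, ?_⟩, ?_⟩ <;> intro m hm <;> obtain ⟨i, hi, hle⟩ := h m hm <;>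
      refine ⟨i, hi, ?_⟩ <;> rw [le_fin4] at hle ⊢ <;>
      simp only [Finsupp.add_apply, Finsupp.smul_apply, Finsupp.single_apply, smul_eq_mul] at hle ⊢ <;>
      simp at hle ⊢ <;> omega
end

section
/- Let J be the ideal of a nonminimal tetrahedral curve that is not of the form (0,r,r,r,r,0) even after permuting the variables, and suppose J is a basic double link of I in which I is obtained by reducing a facet of J of maximal weight. Then the maximal weight of a facet of J is strictly larger than the maximal weight of a facet of I. -/
/-! Facet weights and facet reductions of a tetrahedral tuple `(a 0, …, a 5)`
(edge order `(a,b),(a,c),(a,d),(b,c),(b,d),(c,d)`; the four facets are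
`{a1,a2,a3}, {a1,a4,a5}, {a2,a4,a6}, {a3,a5,a6}`). -/

/-- Weights of the four facets. -/
def wA (a : Fin 6 → ℕ) : ℕ := a 0 + a 1 + a 2
def wB (a : Fin 6 → ℕ) : ℕ := a 0 + a 3 + a 4
def wC (a : Fin 6 → ℕ) : ℕ := a 1 + a 3 + a 5
def wD (a : Fin 6 → ℕ) : ℕ := a 2 + a 4 + a 5

/-- Maximal weight of a facet. -/
def maxW (a : Fin 6 → ℕ) : ℕ := max (max (wA a) (wB a)) (max (wC a) (wD a))

/-- The inequality systems allowing reduction of each facet. -/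
def condA (a : Fin 6 → ℕ) : Prop := a 3 ≤ a 0 + a 1 ∧ a 4 ≤ a 0 + a 2 ∧ a 5 ≤ a 1 + a 2
def condB (a : Fin 6 → ℕ) : Prop := a 1 ≤ a 0 + a 3 ∧ a 2 ≤ a 0 + a 4 ∧ a 5 ≤ a 3 + a 4
def condC (a : Fin 6 → ℕ) : Prop := a 0 ≤ a 1 + a 3 ∧ a 2 ≤ a 1 + a 5 ∧ a 4 ≤ a 3 + a 5
def condD (a : Fin 6 → ℕ) : Prop := a 0 ≤ a 2 + a 4 ∧ a 1 ≤ a 2 + a 5 ∧ a 3 ≤ a 4 + a 5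

/-- The facet reductions, replacing each entry `x` of the facet by `max 0 (x - 1)`
(truncated subtraction). -/
def redA (a : Fin 6 → ℕ) : Fin 6 → ℕ := ![a 0 - 1, a 1 - 1, a 2 - 1, a 3, a 4, a 5]
def redB (a : Fin 6 → ℕ) : Fin 6 → ℕ := ![a 0 - 1, a 1, a 2, a 3 - 1, a 4 - 1, a 5]
def redC (a : Fin 6 → ℕ) : Fin 6 → ℕ := ![a 0, a 1 - 1, a 2, a 3 - 1, a 4, a 5 - 1]
def redD (a : Fin 6 → ℕ) : Fin 6 → ℕ := ![a 0, a 1, a 2 - 1, a 3, a 4 - 1, a 5 - 1]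

/-- The tuples of type `(0,r,r,r,r,0)` up to a permutation of the four variables. -/
def IsSpecial (a : Fin 6 → ℕ) : Prop :=
  ∃ r : ℕ, 0 < r ∧
    (a = ![0, r, r, r, r, 0] ∨ a = ![r, 0, r, r, 0, r] ∨ a = ![r, r, 0, 0, r, r])

/-- A tuple is nonminimal when some facet reduction is possible. -/
def Nonminimal (a : Fin 6 → ℕ) : Prop := condA a ∨ condB a ∨ condC a ∨ condD a

lemma nontriv' (a : Fin 6 → ℕ) (hnt : ∃ i, a i ≠ 0) :
    ¬(a 0 = 0 ∧ a 1 = 0 ∧ a 2 = 0 ∧ a 3 = 0 ∧ a 4 = 0 ∧ a 5 = 0) := by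
  rintro ⟨h0, h1, h2, h3, h4, h5⟩
  obtain ⟨i, hi⟩ := hnt
  fin_cases i <;> simp_all

lemma nospec1 (a : Fin 6 → ℕ) (hsp : ¬ IsSpecial a) (hr : 0 < a 1) :
    ¬(a 0 = 0 ∧ a 1 = a 2 ∧ a 1 = a 3 ∧ a 1 = a 4 ∧ a 5 = 0) := by
  rintro ⟨h0, h2, h3, h4, h5⟩
  exact hsp ⟨a 1, hr, Or.inl (funext fun i => by
    fin_cases i <;> first | exact h0 | exact h5 | rfl | exact h2.symm | exact h3.symm | exact h4.symm)⟩

lemma nospec2 (a : Fin 6 → ℕ) (hsp : ¬ IsSpecial a) (hr : 0 < a 0) :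
    ¬(a 1 = 0 ∧ a 0 = a 2 ∧ a 0 = a 3 ∧ a 0 = a 5 ∧ a 4 = 0) := by
  rintro ⟨h1, h2, h3, h5, h4⟩
  exact hsp ⟨a 0, hr, Or.inr (Or.inl (funext fun i => by
    fin_cases i <;> first | exact h1 | exact h4 | rfl | exact h2.symm | exact h3.symm | exact h5.symm))⟩

lemma nospec3 (a : Fin 6 → ℕ) (hsp : ¬ IsSpecial a) (hr : 0 < a 0) :
    ¬(a 2 = 0 ∧ a 0 = a 1 ∧ a 0 = a 4 ∧ a 0 = a 5 ∧ a 3 = 0) := by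
  rintro ⟨h2, h1, h4, h5, h3⟩
  exact hsp ⟨a 0, hr, Or.inr (Or.inr (funext fun i => by
    fin_cases i <;> first | exact h2 | exact h3 | rfl | exact h1.symm | exact h4.symm | exact h5.symm))⟩

/-- If a nontrivial, nonminimal tetrahedral tuple, not of type `(0,r,r,r,r,0)` up to
symmetry, is reduced at a facet of maximal weight, then the maximal facet weight
strictly decreases. -/
theorem stmt15 (a : Fin 6 → ℕ) (hnt : ∃ i, a i ≠ 0) (hsp : ¬ IsSpecial a)
    (hnm : Nonminimal a) :
    (condA a ∧ wA a = maxW a → maxW (redA a) < maxW a) ∧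
    (condB a ∧ wB a = maxW a → maxW (redB a) < maxW a) ∧
    (condC a ∧ wC a = maxW a → maxW (redC a) < maxW a) ∧
    (condD a ∧ wD a = maxW a → maxW (redD a) < maxW a) := by
  have h0 := nontriv' a hnt
  have hs1 : 0 < a 1 → _ := nospec1 a hsp
  have hs2 : 0 < a 0 → _ := nospec2 a hsp
  have hs3 : 0 < a 0 → _ := nospec3 a hsp
  clear hnt hsp hnm
  refine ⟨fun ⟨hc, hm⟩ => ?_, fun ⟨hc, hm⟩ => ?_, fun ⟨hc, hm⟩ => ?_, fun ⟨hc, hm⟩ => ?_⟩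
  · have h1 : maxW (redA a) = max (max ((a 0 - 1) + (a 1 - 1) + (a 2 - 1)) ((a 0 - 1) + a 3 + a 4)) (max ((a 1 - 1) + a 3 + a 5) ((a 2 - 1) + a 4 + a 5)) := rfl
    have h2 : maxW a = max (max (a 0 + a 1 + a 2) (a 0 + a 3 + a 4)) (max (a 1 + a 3 + a 5) (a 2 + a 4 + a 5)) := rfl
    have h3 : wA a = a 0 + a 1 + a 2 := rfl
    rw [h2, h3] at hm
    have hA : a 0 + a 1 + a 2 ≤ a 0 + a 1 + a 2 := by (conv_rhs => rw [hm]); exact le_trans (le_max_left _ _) (le_max_left _ _)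
    have hB : a 0 + a 3 + a 4 ≤ a 0 + a 1 + a 2 := by (conv_rhs => rw [hm]); exact le_trans (le_max_right _ _) (le_max_left _ _)
    have hC : a 1 + a 3 + a 5 ≤ a 0 + a 1 + a 2 := by (conv_rhs => rw [hm]); exact le_trans (le_max_left _ _) (le_max_right _ _)
    have hD : a 2 + a 4 + a 5 ≤ a 0 + a 1 + a 2 := by (conv_rhs => rw [hm]); exact le_trans (le_max_right _ _) (le_max_right _ _)
    rw [h1, h2, ← hm]
    obtain ⟨c1, c2, c3⟩ := hc
    clear h1 h2 h3 hm
    refine max_lt (max_lt ?_ ?_) (max_lt ?_ ?_) <;> omega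
  · have h1 : maxW (redB a) = max (max ((a 0 - 1) + a 1 + a 2) ((a 0 - 1) + (a 3 - 1) + (a 4 - 1))) (max (a 1 + (a 3 - 1) + a 5) (a 2 + (a 4 - 1) + a 5)) := rfl
    have h2 : maxW a = max (max (a 0 + a 1 + a 2) (a 0 + a 3 + a 4)) (max (a 1 + a 3 + a 5) (a 2 + a 4 + a 5)) := rfl
    have h3 : wB a = a 0 + a 3 + a 4 := rfl
    rw [h2, h3] at hm
    have hA : a 0 + a 1 + a 2 ≤ a 0 + a 3 + a 4 := by (conv_rhs => rw [hm]); exact le_trans (le_max_left _ _) (le_max_left _ _)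
    have hB : a 0 + a 3 + a 4 ≤ a 0 + a 3 + a 4 := by (conv_rhs => rw [hm]); exact le_trans (le_max_right _ _) (le_max_left _ _)
    have hC : a 1 + a 3 + a 5 ≤ a 0 + a 3 + a 4 := by (conv_rhs => rw [hm]); exact le_trans (le_max_left _ _) (le_max_right _ _)
    have hD : a 2 + a 4 + a 5 ≤ a 0 + a 3 + a 4 := by (conv_rhs => rw [hm]); exact le_trans (le_max_right _ _) (le_max_right _ _)
    rw [h1, h2, ← hm]
    obtain ⟨c1, c2, c3⟩ := hc
    clear h1 h2 h3 hm
    refine max_lt (max_lt ?_ ?_) (max_lt ?_ ?_) <;> omega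
  · have h1 : maxW (redC a) = max (max (a 0 + (a 1 - 1) + a 2) (a 0 + (a 3 - 1) + a 4)) (max ((a 1 - 1) + (a 3 - 1) + (a 5 - 1)) (a 2 + a 4 + (a 5 - 1))) := rfl
    have h2 : maxW a = max (max (a 0 + a 1 + a 2) (a 0 + a 3 + a 4)) (max (a 1 + a 3 + a 5) (a 2 + a 4 + a 5)) := rfl
    have h3 : wC a = a 1 + a 3 + a 5 := rfl
    rw [h2, h3] at hm
    have hA : a 0 + a 1 + a 2 ≤ a 1 + a 3 + a 5 := by (conv_rhs => rw [hm]); exact le_trans (le_max_left _ _) (le_max_left _ _)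
    have hB : a 0 + a 3 + a 4 ≤ a 1 + a 3 + a 5 := by (conv_rhs => rw [hm]); exact le_trans (le_max_right _ _) (le_max_left _ _)
    have hC : a 1 + a 3 + a 5 ≤ a 1 + a 3 + a 5 := by (conv_rhs => rw [hm]); exact le_trans (le_max_left _ _) (le_max_right _ _)
    have hD : a 2 + a 4 + a 5 ≤ a 1 + a 3 + a 5 := by (conv_rhs => rw [hm]); exact le_trans (le_max_right _ _) (le_max_right _ _)
    rw [h1, h2, ← hm]
    obtain ⟨c1, c2, c3⟩ := hc
    clear h1 h2 h3 hm
    refine max_lt (max_lt ?_ ?_) (max_lt ?_ ?_) <;> omega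
  · have h1 : maxW (redD a) = max (max (a 0 + a 1 + (a 2 - 1)) (a 0 + a 3 + (a 4 - 1))) (max (a 1 + a 3 + (a 5 - 1)) ((a 2 - 1) + (a 4 - 1) + (a 5 - 1))) := rfl
    have h2 : maxW a = max (max (a 0 + a 1 + a 2) (a 0 + a 3 + a 4)) (max (a 1 + a 3 + a 5) (a 2 + a 4 + a 5)) := rfl
    have h3 : wD a = a 2 + a 4 + a 5 := rfl
    rw [h2, h3] at hm
    have hA : a 0 + a 1 + a 2 ≤ a 2 + a 4 + a 5 := by (conv_rhs => rw [hm]); exact le_trans (le_max_left _ _) (le_max_left _ _)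
    have hB : a 0 + a 3 + a 4 ≤ a 2 + a 4 + a 5 := by (conv_rhs => rw [hm]); exact le_trans (le_max_right _ _) (le_max_left _ _)
    have hC : a 1 + a 3 + a 5 ≤ a 2 + a 4 + a 5 := by (conv_rhs => rw [hm]); exact le_trans (le_max_left _ _) (le_max_right _ _)
    have hD : a 2 + a 4 + a 5 ≤ a 2 + a 4 + a 5 := by (conv_rhs => rw [hm]); exact le_trans (le_max_right _ _) (le_max_right _ _)
    rw [h1, h2, ← hm]
    obtain ⟨c1, c2, c3⟩ := hc
    clear h1 h2 h3 hm
    refine max_lt (max_lt ?_ ?_) (max_lt ?_ ?_) <;> omega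
end
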